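/- Let G be a simple graph on a vertex type V, let φ', φ : Sym2 V → Fin K be two classifications of edges such that φ'(e) ≤ φ(e) for every edge e of G, and let w be a walk in G containing at least one edge e₀ with φ'(e₀) < φ(e₀). Then the class-count vector of w under φ' is strictly smaller than that under φ in the colex order: θ_{φ'}(w) <_colex θ_φ(w). -/

import Mathlib

open scoped NNReal

/-- The colexicographic strict order on `Fin K → ℕ`. -/
def ColexLt {K : ℕ} (a b : Fin K → ℕ) : Prop :=
  ∃ k, a k < b k ∧ ∀ j, k < j → a j = b j

/-- The colexicographic order: `a ≤_colex b` iff `a <_colex b` or `a = b`. -/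
def ColexLe {K : ℕ} (a b : Fin K → ℕ) : Prop :=
  ColexLt a b ∨ a = b

/-- The class-count vector of a walk: `theta G φ w k` is the number of edges of `w`
(with multiplicity) whose class under `φ` is `k`. -/
def theta {V : Type*} {K : ℕ} (G : SimpleGraph V) (φ : Sym2 V → Fin K)
    {s g : V} (w : G.Walk s g) : Fin K → ℕ :=
  fun k => w.edges.countP (fun e => decide (φ e = k))

/-- The total weight of a walk: the sum of `c` over its edges (with multiplicity). -/
def weight {V : Type*} (G : SimpleGraph V) (c : Sym2 V → ℝ≥0)
    {s g : V} (w : G.Walk s g) : ℝ≥0 :=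
  (w.edges.map c).sum

/-- The largest class `k` with `theta G φ w k > 0`, for a walk with at least one edge. -/
def maxClass {V : Type*} {K : ℕ} (G : SimpleGraph V) (φ : Sym2 V → Fin K)
    {s g : V} (w : G.Walk s g) (hw : w.edges ≠ []) : Fin K :=
  (Finset.univ.filter fun k => 0 < theta G φ w k).max' (by
    obtain ⟨e, he⟩ := List.exists_mem_of_ne_nil w.edges hw
    refine ⟨φ e, ?_⟩
    simp only [Finset.mem_filter, Finset.mem_univ, true_and, theta]
    exact Finset.mem_filter.mpr ⟨Finset.mem_univ _,
      (List.countP_pos_iff (p := fun e' => decide (φ e' = φ e))).mpr ⟨e, he, by simp⟩⟩)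

/-- A walk between distinct vertices has at least one edge. -/
theorem edges_ne_nil_of_ne {V : Type*} {G : SimpleGraph V} {s g : V}
    (h : s ≠ g) (w : G.Walk s g) : w.edges ≠ [] := by
  cases w with
  | nil => exact absurd rfl h
  | cons h' p => simp

/-- Lexicographic order on pairs `(maxClass, count)`. -/
def PairLe {K : ℕ} (p q : Fin K × ℕ) : Prop :=
  p.1 < q.1 ∨ (p.1 = q.1 ∧ p.2 ≤ q.2)

/-- Lexicographic order on keys `(class-count vector, weight)`:
first the colex order on the vectors, then the usual order on weights. -/
def KeyLe {K : ℕ} (p q : (Fin K → ℕ) × ℝ≥0) : Prop :=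
  ColexLt p.1 q.1 ∨ (p.1 = q.1 ∧ p.2 ≤ q.2)

theorem List.countP_lt_countP {α : Type*} {p q : α → Bool} {l : List α}
    (hpq : ∀ x ∈ l, p x → q x) {x : α} (hx : x ∈ l) (hqx : q x) (hpx : ¬p x) :
    l.countP p < l.countP q := by
  induction l with
  | nil => cases hx
  | cons a l ih =>
    have hpq_tail : ∀ y ∈ l, p y → q y := fun y hy => hpq y (List.mem_cons_of_mem a hy)
    have hpq_head := hpq a List.mem_cons_self
    simp only [List.countP_cons]
    rcases List.mem_cons.mp hx with rfl | hx
    · have := List.countP_mono_left hpq_tail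
      rw [if_neg hpx, if_pos hqx]
      omega
    · have := ih hpq_tail hx
      by_cases hpa : p a
      · rw [if_pos hpa, if_pos (hpq_head hpa)]
        omega
      · rw [if_neg hpa]
        split_ifs <;> omega

/-- Take `k` to be the largest value of `g` at an element where `f < g`. Above `k`, and at `k`
for `f`, every element that takes the value has `f = g`; the maximizer itself is counted by
`g` at `k` but not by `f`. -/
theorem List.exists_countP_lt_and_countP_eq_of_lt {α β : Type*} [LinearOrder β] {l : List α}
    {f g : α → β} (hle : ∀ x ∈ l, f x ≤ g x) {x₀ : α} (hx₀ : x₀ ∈ l) (hlt₀ : f x₀ < g x₀) :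
    ∃ k, l.countP (f · = k) < l.countP (g · = k) ∧
      ∀ j, k < j → l.countP (f · = j) = l.countP (g · = j) := by
  obtain ⟨x₁, ⟨hx₁, hlt₁⟩, hmax⟩ := Set.exists_max_image {x | x ∈ l ∧ f x < g x} g
    (l.finite_toSet.subset fun x hx => hx.1) ⟨x₀, hx₀, hlt₀⟩
  have eq_of_lt_g : ∀ y ∈ l, g x₁ < g y → f y = g y := fun y hy hgy =>
    (hle y hy).eq_of_not_lt fun hfg => (hmax y ⟨hy, hfg⟩).not_gt hgy
  have eq_of_le_f : ∀ y ∈ l, g x₁ ≤ f y → f y = g y := fun y hy hfy =>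
    (hle y hy).eq_of_not_lt fun hfg => (hmax y ⟨hy, hfg⟩).not_gt (hfy.trans_lt hfg)
  refine ⟨g x₁, List.countP_lt_countP ?_ hx₁ (by simp) (by simpa using hlt₁.ne), ?_⟩
  · intro y hy hfy
    simp only [decide_eq_true_eq] at hfy ⊢
    rw [← eq_of_le_f y hy hfy.ge, hfy]
  · intro j hj
    refine List.countP_congr fun y hy => ?_
    simp only [decide_eq_true_eq]
    constructor
    · rintro rfl
      rw [eq_of_le_f y hy hj.le]
    · rintro rfl
      rw [eq_of_lt_g y hy hj]

/-- If `φ'` is pointwise at most `φ` on the edges of `G`, and a walk `w` contains an edge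
`e₀` with `φ' e₀ < φ e₀`, then the class-count vector of `w` under `φ'` is strictly
smaller than that under `φ` in the colex order. -/
theorem theta_strict_mono_colexLt {V : Type*} {K : ℕ}
    (G : SimpleGraph V) (φ' φ : Sym2 V → Fin K)
    (h : ∀ e ∈ G.edgeSet, φ' e ≤ φ e) {s g : V} (w : G.Walk s g)
    (e₀ : Sym2 V) (he₀ : e₀ ∈ w.edges) (hlt : φ' e₀ < φ e₀) :
    ColexLt (theta G φ' w) (theta G φ w) :=
  List.exists_countP_lt_and_countP_eq_of_lt
    (fun e he => h e (w.edges_subset_edgeSet he)) he₀ hlt
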